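/- Let ω = (i₁, b₁, i₂, b₂) be a 2-clause over n Boolean variables and let x : Fin n → Bool be an assignment. Then the Hamming distance between x̂ and the clause string s_ω is at most n if and only if x satisfies ω (i.e., x(i₁) = b₁ or x(i₂) = b₂). Moreover, d(x̂, s_ω) = (n − 2) + 2u, where u ∈ {0,1,2} is the number of the two literals of ω that x fails to satisfy. -/
import Mathlib


/-- The pair index of a position `p` in a string of length `2n`. -/
def halfIdx {n : ℕ} (p : Fin (2*n)) : Fin n := ⟨p.val / 2, by omega⟩

/-- The string `s_ω` associated to the 2-clause `ω = (i₁,b₁,i₂,b₂)`: pair `i₁` is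
`(b₁,b₁)`, pair `i₂` is `(b₂,b₂)`, and every other pair is `(false,true)`. -/
def clauseStr {n : ℕ} (i₁ i₂ : Fin n) (b₁ b₂ : Bool) : Fin (2*n) → Bool :=
  fun p => if halfIdx p = i₁ then b₁ else if halfIdx p = i₂ then b₂
           else decide (p.val % 2 = 1)

/-- The string `x̂` associated to an assignment `x`: pair `i` is `(x i, x i)`. -/
def hatStr {n : ℕ} (x : Fin n → Bool) : Fin (2*n) → Bool := fun p => x (halfIdx p)

/-- For a 2-clause `ω = (i₁,b₁,i₂,b₂)` with `i₁ ≠ i₂` and an assignment `x`: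
`d(x̂, s_ω) ≤ n` iff `x` satisfies `ω`; moreover `d(x̂, s_ω) = (n-2) + 2u` where
`u` is the number of the two literals of `ω` that `x` fails to satisfy. -/
theorem stmt5 (n : ℕ) (i₁ i₂ : Fin n) (hne : i₁ ≠ i₂) (b₁ b₂ : Bool)
    (x : Fin n → Bool) :
    (hammingDist (hatStr x) (clauseStr i₁ i₂ b₁ b₂) ≤ n ↔ (x i₁ = b₁ ∨ x i₂ = b₂)) ∧
    hammingDist (hatStr x) (clauseStr i₁ i₂ b₁ b₂) =
      (n - 2) + 2 * ((if x i₁ = b₁ then 0 else 1) + (if x i₂ = b₂ then 0 else 1)) := by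
  have hn : 2 ≤ n := by
    rcases Nat.lt_or_ge n 2 with h | h
    · interval_cases n
      · exact absurd i₁.2 (by omega)
      · exact absurd (Fin.ext (by omega) : i₁ = i₂) hne
    · exact h
  set F : Fin (2*n) → ℕ :=
    fun p => if hatStr x p ≠ clauseStr i₁ i₂ b₁ b₂ p then 1 else 0 with hF
  set e : Fin n × Fin 2 ≃ Fin (2*n) :=
    finProdFinEquiv.trans (finCongr (by ring)) with he
  have hval : ∀ (i : Fin n) (j : Fin 2), ((e (i, j)) : ℕ) = 2 * i.val + j.val := by
    intro i j
    simp [he, finProdFinEquiv, finCongr]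
    omega
  have hhalf : ∀ (i : Fin n) (j : Fin 2), halfIdx (e (i, j)) = i := by
    intro i j
    have := hval i j
    have hj := j.2
    apply Fin.ext
    simp only [halfIdx, this]
    omega
  have hmod : ∀ (i : Fin n) (j : Fin 2), ((e (i, j)) : ℕ) % 2 = j.val := by
    intro i j
    have := hval i j
    have hj := j.2
    omega
  -- contribution of pair i
  set f : Fin n → ℕ := fun i => F (e (i, 0)) + F (e (i, 1)) with hf
  have hsum : hammingDist (hatStr x) (clauseStr i₁ i₂ b₁ b₂) = ∑ i : Fin n, f i := by
    rw [hammingDist, Finset.card_filter]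
    rw [← Fintype.sum_equiv e (fun q => F (e q)) F (fun q => rfl)]
    rw [Fintype.sum_prod_type]
    exact Finset.sum_congr rfl fun i _ => by rw [Fin.sum_univ_two]
  have hf1 : f i₁ = 2 * (if x i₁ = b₁ then 0 else 1) := by
    simp only [hf, hF, hatStr, clauseStr, hhalf, if_pos rfl]
    by_cases h : x i₁ = b₁ <;> simp [h]
  have hf2 : f i₂ = 2 * (if x i₂ = b₂ then 0 else 1) := by
    simp only [hf, hF, hatStr, clauseStr, hhalf, if_neg hne.symm, if_pos rfl]
    by_cases h : x i₂ = b₂ <;> simp [h]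
  have hfo : ∀ i : Fin n, i ≠ i₁ → i ≠ i₂ → f i = 1 := by
    intro i h1 h2
    simp only [hf, hF, hatStr, clauseStr, hhalf, if_neg h1, if_neg h2, hmod]
    cases hx : x i <;> simp
  have hcount : ∑ i : Fin n, f i =
      (n - 2) + 2 * ((if x i₁ = b₁ then 0 else 1) + (if x i₂ = b₂ then 0 else 1)) := by
    have hsplit : (Finset.univ : Finset (Fin n)) =
        insert i₁ (insert i₂ (Finset.univ \ {i₁, i₂})) := by
      ext i
      by_cases h1 : i = i₁ <;> by_cases h2 : i = i₂ <;> simp [h1, h2]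
    rw [hsplit, Finset.sum_insert (by simp [hne]),
        Finset.sum_insert (by simp)]
    have hrest : ∑ i ∈ Finset.univ \ {i₁, i₂}, f i = n - 2 := by
      rw [Finset.sum_congr rfl (fun i hi => by
        simp only [Finset.mem_sdiff, Finset.mem_insert, Finset.mem_singleton] at hi
        push_neg at hi
        exact hfo i hi.2.1 hi.2.2)]
      simp only [Finset.sum_const, smul_eq_mul, mul_one]
      rw [Finset.card_sdiff_of_subset (by simp)]
      simp [Finset.card_insert_of_notMem, hne]
    rw [hrest, hf1, hf2]
    ring
  have key := hsum.trans hcount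
  refine ⟨?_, key⟩
  rw [key]
  by_cases h1 : x i₁ = b₁ <;> by_cases h2 : x i₂ = b₂ <;>
    simp [h1, h2] <;> omega
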